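/- The set of multiple almost-Riordan arrays (b | g; f₁, …, f_ℓ) is closed under the multiplication (b|g;f₁,…,f_ℓ)(c|d;h₁,…,h_ℓ) = (c(0)·b + (tg/f_ℓ)(c(h) − c(0)) | g·d(h); (f₁/h)h₁(h), …, (f_ℓ/h)h_ℓ(h)), where h = (f₁⋯f_ℓ)^{1/ℓ}, and this multiplication makes the set a group with identity (1 | 1; t, …, t). -/

import Mathlib

open PowerSeries

/-- Composition `g ∘ f` of formal power series (meaningful when `f` has zero
constant term). -/
noncomputable def pcomp {K : Type*} [Field K] (g f : PowerSeries K) : PowerSeries K :=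
  PowerSeries.mk fun n => ∑ k ∈ Finset.range (n + 1), coeff k g * coeff n (f ^ k)

/-- `f/t`: the coefficient shift of a power series. -/
noncomputable def pdivX {K : Type*} [Field K] (f : PowerSeries K) : PowerSeries K :=
  PowerSeries.mk fun n => coeff (n + 1) f

/-- `g ∈ K[[t^ℓ]]`. -/
def InTl {K : Type*} [Field K] (ℓ : ℕ) (g : PowerSeries K) : Prop :=
  ∀ n : ℕ, ¬ ℓ ∣ n → coeff n g = 0

/-- A multiplier function: `f ∈ t·K[[t^ℓ]]` with `f'(0) ≠ 0`. -/
def IsMult {K : Type*} [Field K] (ℓ : ℕ) (f : PowerSeries K) : Prop :=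
  constantCoeff f = 0 ∧ (∀ n : ℕ, n % ℓ ≠ 1 % ℓ → coeff n f = 0) ∧ coeff 1 f ≠ 0

/-- A multiple almost-Riordan array `(b | g; f₁, …, f_ℓ)` (with `ℓ = m + 1`),
together with its chosen `ℓ`-th root `h` of `f₁⋯f_ℓ`. -/
def IsMaR {K : Type*} [Field K] (m : ℕ)
    (p : PowerSeries K × PowerSeries K × (Fin (m + 1) → PowerSeries K) × PowerSeries K) :
    Prop :=
  InTl (m + 1) p.1 ∧ constantCoeff p.1 ≠ 0 ∧
    InTl (m + 1) p.2.1 ∧ constantCoeff p.2.1 ≠ 0 ∧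
    (∀ j, IsMult (m + 1) (p.2.2.1 j)) ∧ IsMult (m + 1) p.2.2.2 ∧
    p.2.2.2 ^ (m + 1) = ∏ j, p.2.2.1 j

/-- The multiple almost-Riordan product
`(b|g;f₁,…,f_ℓ)(c|d;h₁,…,h_ℓ) =
 (c(0)·b + (tg/f_ℓ)(c(h) − c(0)) | g·d(h); (f₁/h)h₁(h), …, (f_ℓ/h)h_ℓ(h))`. -/
noncomputable def maMul {K : Type*} [Field K] {m : ℕ}
    (p q : PowerSeries K × PowerSeries K × (Fin (m + 1) → PowerSeries K) × PowerSeries K) :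
    PowerSeries K × PowerSeries K × (Fin (m + 1) → PowerSeries K) × PowerSeries K :=
  (C (constantCoeff q.1) * p.1 +
      p.2.1 * (pdivX (p.2.2.1 (Fin.last m)))⁻¹ *
        (pcomp q.1 p.2.2.2 - C (constantCoeff q.1)),
    p.2.1 * pcomp q.2.1 p.2.2.2,
    fun j => pdivX (p.2.2.1 j) * (pdivX p.2.2.2)⁻¹ * pcomp (q.2.2.1 j) p.2.2.2,
    pcomp q.2.2.2 p.2.2.2)

/-!
Composition `a ↦ a ∘ h` with a series `h(0) = 0` is Mathlib's `PowerSeries.subst`, a ring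
endomorphism, and composition is associative; moreover `h = t · (h/t)` with `h/t` invertible.
So every component of a product, a triple product or a product with the identity is an
algebraic expression in composites with the roots, and the group laws become ring identities.
The root of `p q` is `h_q ∘ h_p`, since `(h_p/t)^ℓ = ∏ⱼ fⱼ/t` makes the `ℓ`-th power of the
new root the product of the new multipliers.

Membership in `t^r K[[t^ℓ]]` only depends on `r mod ℓ`, and it is stable under sums, products,
inverses, division by `t` (lowering `r` by one) and composition with series in `t K[[t^ℓ]]`.

The inverse of `p` is built from the compositional inverse of its root. It is a right inverse,
and since it has a right inverse itself, associativity makes it a two-sided inverse.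
-/

namespace AlmostRiordan

variable {K : Type*} [Field K]

section Composition

theorem coeff_pow_of_lt {f : K⟦X⟧} (hf : constantCoeff f = 0) {n k : ℕ} (h : n < k) :
    coeff n (f ^ k) = 0 :=
  X_pow_dvd_iff.mp (pow_dvd_pow_of_dvd (X_dvd_iff.mpr hf) k) n h

theorem coeff_pcomp (a f : K⟦X⟧) (n : ℕ) :
    coeff n (pcomp a f) = ∑ k ∈ Finset.range (n + 1), coeff k a * coeff n (f ^ k) := by
  simp [pcomp]

theorem constantCoeff_pcomp (a f : K⟦X⟧) : constantCoeff (pcomp a f) = constantCoeff a := by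
  rw [← coeff_zero_eq_constantCoeff_apply, coeff_pcomp]
  simp

theorem coeff_one_pcomp (a f : K⟦X⟧) : coeff 1 (pcomp a f) = coeff 1 a * coeff 1 f := by
  simp [coeff_pcomp, Finset.sum_range_succ]

theorem pcomp_eq_subst {f : K⟦X⟧} (hf : constantCoeff f = 0) (a : K⟦X⟧) :
    pcomp a f = a.subst f := by
  ext n
  rw [coeff_pcomp, coeff_subst' (HasSubst.of_constantCoeff_zero' hf),
    finsum_eq_sum_of_support_subset _ (s := Finset.range (n + 1))]
  · simp only [smul_eq_mul]
  · intro k hk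
    contrapose! hk
    rw [Function.notMem_support, coeff_pow_of_lt hf (by simpa using hk), smul_zero]

theorem pcomp_X_right (a : K⟦X⟧) : pcomp a X = a := by
  rw [pcomp_eq_subst constantCoeff_X, X_subst]

variable {f : K⟦X⟧} (hf : constantCoeff f = 0)
include hf

theorem pcomp_eq_substAlgHom (a : K⟦X⟧) :
    pcomp a f = substAlgHom (HasSubst.of_constantCoeff_zero' hf) a := by
  rw [coe_substAlgHom, pcomp_eq_subst hf]

theorem pcomp_add (a b : K⟦X⟧) : pcomp (a + b) f = pcomp a f + pcomp b f := by
  simp only [pcomp_eq_substAlgHom hf, map_add]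

theorem pcomp_sub (a b : K⟦X⟧) : pcomp (a - b) f = pcomp a f - pcomp b f := by
  simp only [pcomp_eq_substAlgHom hf, map_sub]

theorem pcomp_mul (a b : K⟦X⟧) : pcomp (a * b) f = pcomp a f * pcomp b f := by
  simp only [pcomp_eq_substAlgHom hf, map_mul]

theorem pcomp_pow (a : K⟦X⟧) (k : ℕ) : pcomp (a ^ k) f = pcomp a f ^ k := by
  simp only [pcomp_eq_substAlgHom hf, map_pow]

theorem pcomp_prod {ι : Type*} (s : Finset ι) (a : ι → K⟦X⟧) :
    pcomp (∏ i ∈ s, a i) f = ∏ i ∈ s, pcomp (a i) f := by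
  simp only [pcomp_eq_substAlgHom hf, map_prod]

theorem pcomp_C (c : K) : pcomp (C c) f = C c := by
  rw [pcomp_eq_substAlgHom hf, ← algebraMap_eq, AlgHom.commutes]

theorem pcomp_one : pcomp 1 f = 1 := by
  simpa using pcomp_C hf 1

theorem pcomp_X : pcomp X f = f := by
  rw [pcomp_eq_substAlgHom hf, substAlgHom_X]

theorem pcomp_inv {a : K⟦X⟧} (ha : constantCoeff a ≠ 0) : pcomp a⁻¹ f = (pcomp a f)⁻¹ :=
  (PowerSeries.eq_inv_iff_mul_eq_one (by rwa [constantCoeff_pcomp])).mpr <| by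
    rw [← pcomp_mul hf, PowerSeries.inv_mul_cancel a ha, pcomp_one hf]

theorem pcomp_pcomp {g : K⟦X⟧} (hg : constantCoeff g = 0) (a : K⟦X⟧) :
    pcomp (pcomp a g) f = pcomp a (pcomp g f) := by
  have hgf : constantCoeff (g.subst f) = 0 := by
    rw [← pcomp_eq_subst hf, constantCoeff_pcomp, hg]
  rw [pcomp_eq_subst hf, pcomp_eq_subst hf, pcomp_eq_subst hg, pcomp_eq_subst hgf,
    subst_comp_subst_apply (HasSubst.of_constantCoeff_zero' hg)
      (HasSubst.of_constantCoeff_zero' hf)]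

end Composition

theorem coeff_pdivX (f : K⟦X⟧) (n : ℕ) : coeff n (pdivX f) = coeff (n + 1) f := by
  simp [pdivX]

theorem constantCoeff_pdivX (f : K⟦X⟧) : constantCoeff (pdivX f) = coeff 1 f := by
  rw [← coeff_zero_eq_constantCoeff_apply, coeff_pdivX]

theorem constantCoeff_pdivX_ne_zero {f : K⟦X⟧} (hf : coeff 1 f ≠ 0) :
    constantCoeff (pdivX f) ≠ 0 := by
  rwa [constantCoeff_pdivX]

theorem X_mul_pdivX {f : K⟦X⟧} (hf : constantCoeff f = 0) : X * pdivX f = f := by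
  have h := sub_const_eq_X_mul_shift f
  rw [hf, map_zero, sub_zero] at h
  exact h.symm

theorem pdivX_X_mul (f : K⟦X⟧) : pdivX (X * f) = f := by
  ext n
  rw [coeff_pdivX, coeff_succ_X_mul]

theorem pdivX_X : pdivX (X : K⟦X⟧) = 1 := by
  simpa using pdivX_X_mul (1 : K⟦X⟧)

theorem pdivX_mul_left (a : K⟦X⟧) {f : K⟦X⟧} (hf : constantCoeff f = 0) :
    pdivX (a * f) = a * pdivX f := by
  rw [← X_mul_pdivX hf, mul_left_comm, pdivX_X_mul, pdivX_X_mul]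

theorem pdivX_pcomp {a f : K⟦X⟧} (ha : constantCoeff a = 0) (hf : constantCoeff f = 0) :
    pdivX (pcomp a f) = pdivX f * pcomp (pdivX a) f := by
  conv_lhs => rw [← X_mul_pdivX ha]
  rw [pcomp_mul hf, pcomp_X hf, mul_comm, pdivX_mul_left _ hf, mul_comm]

theorem pdivX_pow_eq_prod {ι : Type*} [Fintype ι] {f : K⟦X⟧} {F : ι → K⟦X⟧}
    (hf : constantCoeff f = 0) (hF : ∀ j, constantCoeff (F j) = 0)
    (h : f ^ Fintype.card ι = ∏ j, F j) :
    pdivX f ^ Fintype.card ι = ∏ j, pdivX (F j) := by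
  refine mul_left_cancel₀ (pow_ne_zero (Fintype.card ι) (X_ne_zero (R := K))) ?_
  rw [← mul_pow, X_mul_pdivX hf, h, ← Finset.card_univ, ← Finset.prod_const,
    ← Finset.prod_mul_distrib]
  exact Finset.prod_congr rfl fun j _ => (X_mul_pdivX (hF j)).symm

/-- `a ∈ t^r K[[t^ℓ]]`, with `r` read modulo `ℓ`. -/
def SupportedMod (ℓ : ℕ) (r : ZMod ℓ) (a : K⟦X⟧) : Prop :=
  ∀ n : ℕ, (n : ZMod ℓ) ≠ r → coeff n a = 0

namespace SupportedMod

variable {ℓ : ℕ} {r s : ZMod ℓ} {a b : K⟦X⟧}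

theorem zero : SupportedMod ℓ r (0 : K⟦X⟧) := fun _ _ => map_zero _

theorem C (c : K) : SupportedMod ℓ 0 (C c) := fun n hn => by
  rw [coeff_C, if_neg (by rintro rfl; exact hn Nat.cast_zero)]

theorem one : SupportedMod ℓ 0 (1 : K⟦X⟧) := by
  simpa using C (ℓ := ℓ) (1 : K)

theorem X : SupportedMod ℓ 1 (X : K⟦X⟧) := fun n hn => by
  rw [coeff_X, if_neg (by rintro rfl; exact hn Nat.cast_one)]

theorem add (ha : SupportedMod ℓ r a) (hb : SupportedMod ℓ r b) :
    SupportedMod ℓ r (a + b) := fun n hn => by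
  rw [map_add, ha n hn, hb n hn, add_zero]

theorem sub (ha : SupportedMod ℓ r a) (hb : SupportedMod ℓ r b) :
    SupportedMod ℓ r (a - b) := fun n hn => by
  rw [map_sub, ha n hn, hb n hn, sub_zero]

theorem mul (ha : SupportedMod ℓ r a) (hb : SupportedMod ℓ s b) :
    SupportedMod ℓ (r + s) (a * b) := fun n hn => by
  rw [coeff_mul]
  refine Finset.sum_eq_zero fun x hx => ?_
  rw [Finset.HasAntidiagonal.mem_antidiagonal] at hx
  by_cases h1 : (x.1 : ZMod ℓ) = r
  · refine mul_eq_zero_of_right _ (hb x.2 fun h2 => hn ?_)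
    rw [← hx, Nat.cast_add, h1, h2]
  · rw [ha x.1 h1, zero_mul]

theorem mul_left (ha : SupportedMod ℓ 0 a) (hb : SupportedMod ℓ r b) :
    SupportedMod ℓ r (a * b) := by
  simpa using ha.mul hb

theorem pow (ha : SupportedMod ℓ r a) (k : ℕ) : SupportedMod ℓ (k * r) (a ^ k) := by
  induction k with
  | zero => simpa using one
  | succ k ih => simpa [pow_succ, add_mul] using ih.mul ha

theorem inv (ha : SupportedMod ℓ 0 a) : SupportedMod ℓ 0 a⁻¹ := by
  intro n hn
  induction n using Nat.strong_induction_on with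
  | _ n ih =>
  rw [coeff_inv, if_neg (by rintro rfl; exact hn Nat.cast_zero)]
  refine mul_eq_zero_of_right _ (Finset.sum_eq_zero fun x hx => ?_)
  rw [Finset.HasAntidiagonal.mem_antidiagonal] at hx
  split_ifs with hlt
  · by_cases h2 : (x.2 : ZMod ℓ) = 0
    · refine mul_eq_zero_of_left (ha x.1 fun h1 => hn ?_) _
      rw [← hx, Nat.cast_add, h1, h2, add_zero]
    · rw [ih x.2 hlt h2, mul_zero]
  · rfl

theorem pcomp {f : K⟦X⟧} (ha : SupportedMod ℓ r a) (hf : SupportedMod ℓ 1 f) :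
    SupportedMod ℓ r (pcomp a f) := fun n hn => by
  rw [coeff_pcomp]
  refine Finset.sum_eq_zero fun k _ => ?_
  by_cases hk : (k : ZMod ℓ) = r
  · refine mul_eq_zero_of_right _ (hf.pow k n ?_)
    rwa [mul_one, hk]
  · rw [ha k hk, zero_mul]

theorem pdivX (ha : SupportedMod ℓ 1 a) : SupportedMod ℓ 0 (pdivX a) := fun n hn => by
  rw [coeff_pdivX]
  exact ha (n + 1) (by simpa using hn)

theorem sum {ι : Type*} (s : Finset ι) {a : ι → K⟦X⟧} (ha : ∀ i ∈ s, SupportedMod ℓ r (a i)) :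
    SupportedMod ℓ r (∑ i ∈ s, a i) :=
  Finset.sum_induction _ (SupportedMod ℓ r) (fun _ _ => add) zero ha

/-- Mathlib builds `substInv f` coefficient by coefficient, reading each new coefficient off
`f` composed with the previous truncation, which is in `t K[[t^ℓ]]` by induction. -/
theorem substInvOfIsUnit {f : K⟦X⟧} (hf : SupportedMod ℓ 1 f) (hu : IsUnit (coeff 1 f)) :
    SupportedMod ℓ 1 (f.substInvOfIsUnit hu) := by
  let := hu.invertible
  rw [substInvOfIsUnit_eq_substInv]
  intro n hn
  induction n using Nat.strong_induction_on with
  | _ n ih =>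
  rw [substInv, coeff_mk]
  match n with
  | 0 => simp [substInvFun]
  | 1 => exact absurd Nat.cast_one hn
  | k + 2 =>
    set B : K⟦X⟧ := ∑ i : Fin (k + 2), PowerSeries.C (substInvFun f i) * PowerSeries.X ^ (i : ℕ)
    have hB0 : constantCoeff B = 0 := by simp [B, zero_pow_eq, substInvFun]
    have hB : SupportedMod ℓ 1 B := sum _ fun i _ => by
      by_cases hi : ((i : ℕ) : ZMod ℓ) = 1
      · simpa [hi] using (C (ℓ := ℓ) (substInvFun f i)).mul (X.pow (K := K) (i : ℕ))
      · have := ih i (by omega) hi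
        rw [substInv, coeff_mk] at this
        rw [this, map_zero, zero_mul]
        exact zero
    rw [substInvFun.eq_3 _ _ (by omega), ← pcomp_eq_subst hB0]
    exact mul_eq_zero_of_right _ (hf.pcomp hB (k + 2) hn)

end SupportedMod

theorem inTl_iff {ℓ : ℕ} {g : K⟦X⟧} : InTl ℓ g ↔ SupportedMod ℓ 0 g := by
  simp only [InTl, SupportedMod, ne_eq, ZMod.natCast_eq_zero_iff]

theorem isMult_iff {ℓ : ℕ} {f : K⟦X⟧} :
    IsMult ℓ f ↔ constantCoeff f = 0 ∧ SupportedMod ℓ 1 f ∧ coeff 1 f ≠ 0 := by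
  simp only [IsMult, SupportedMod, ne_eq, ← Nat.cast_one (R := ZMod ℓ),
    ZMod.natCast_eq_natCast_iff']

theorem pcomp_pow_card_eq_prod {ι : Type*} [Fintype ι] {e f : K⟦X⟧} {F H : ι → K⟦X⟧}
    (hf : constantCoeff f = 0) (hf1 : coeff 1 f ≠ 0) (hF : ∀ j, constantCoeff (F j) = 0)
    (hfF : f ^ Fintype.card ι = ∏ j, F j) (heH : e ^ Fintype.card ι = ∏ j, H j) :
    pcomp e f ^ Fintype.card ι = ∏ j, pdivX (F j) * (pdivX f)⁻¹ * pcomp (H j) f := by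
  rw [Finset.prod_mul_distrib, Finset.prod_mul_distrib, ← pdivX_pow_eq_prod hf hF hfF,
    ← pcomp_prod hf, ← heH, pcomp_pow hf, Finset.prod_const, Finset.card_univ, ← mul_pow,
    PowerSeries.mul_inv_cancel _ (constantCoeff_pdivX_ne_zero hf1), one_pow, one_mul]

theorem prod_inv_pdivX_mul_eq_X_pow {ι : Type*} [Fintype ι] {f : K⟦X⟧} {F : ι → K⟦X⟧}
    (hf : constantCoeff f = 0) (hF : ∀ j, constantCoeff (F j) = 0)
    (hF1 : ∀ j, coeff 1 (F j) ≠ 0) (hfF : f ^ Fintype.card ι = ∏ j, F j) :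
    ∏ j, (pdivX (F j))⁻¹ * f = X ^ Fintype.card ι := by
  have hP (j) := constantCoeff_pdivX_ne_zero (hF1 j)
  refine mul_right_cancel₀ (b := ∏ j, pdivX (F j))
    (Finset.prod_ne_zero_iff.mpr fun j _ h => hP j (by rw [h, map_zero])) ?_
  rw [← Finset.prod_mul_distrib, ← pdivX_pow_eq_prod hf hF hfF, ← mul_pow, X_mul_pdivX hf,
    ← Finset.card_univ, ← Finset.prod_const]
  refine Finset.prod_congr rfl fun j _ => ?_
  rw [mul_right_comm, PowerSeries.inv_mul_cancel _ (hP j), one_mul]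

section Arrays

variable {m : ℕ}

variable (K m) in
abbrev MaData := K⟦X⟧ × K⟦X⟧ × (Fin (m + 1) → K⟦X⟧) × K⟦X⟧

variable (K m) in
noncomputable abbrev maOne : MaData K m := (1, 1, fun _ => X, X)

/-- The inverse of `p`, where `h'` is to be the compositional inverse of the root `p.2.2.2`. -/
noncomputable def maInv (p : MaData K m) (h' : K⟦X⟧) : MaData K m :=
  (pcomp (C (constantCoeff p.1)⁻¹ +
      p.2.1⁻¹ * pdivX (p.2.2.1 (Fin.last m)) * (1 - C (constantCoeff p.1)⁻¹ * p.1)) h',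
    pcomp p.2.1⁻¹ h',
    fun j => pcomp ((pdivX (p.2.2.1 j))⁻¹ * p.2.2.2) h',
    h')

theorem isMaR_iff {b g f : K⟦X⟧} {F : Fin (m + 1) → K⟦X⟧} :
    IsMaR m (b, g, F, f) ↔
      SupportedMod (m + 1) 0 b ∧ constantCoeff b ≠ 0 ∧
      SupportedMod (m + 1) 0 g ∧ constantCoeff g ≠ 0 ∧
      (∀ j, constantCoeff (F j) = 0 ∧ SupportedMod (m + 1) 1 (F j) ∧ coeff 1 (F j) ≠ 0) ∧
      (constantCoeff f = 0 ∧ SupportedMod (m + 1) 1 f ∧ coeff 1 f ≠ 0) ∧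
      f ^ (m + 1) = ∏ j, F j := by
  simp only [IsMaR, inTl_iff, isMult_iff]

theorem isMaR_maMul {p q : MaData K m} (hp : IsMaR m p) (hq : IsMaR m q) :
    IsMaR m (maMul p q) := by
  obtain ⟨b, g, F, f⟩ := p
  obtain ⟨c, d, H, e⟩ := q
  rw [isMaR_iff] at hp hq
  obtain ⟨hb, hb0, hg, hg0, hF, ⟨hf0, hf, hf1⟩, hfF⟩ := hp
  obtain ⟨hc, hc0, hd, hd0, hH, ⟨he0, he, he1⟩, heH⟩ := hq
  have hP (j) : SupportedMod (m + 1) 0 (pdivX (F j)) := (hF j).2.1.pdivX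
  refine isMaR_iff.mpr ⟨?_, ?_, hg.mul_left (hd.pcomp hf), ?_, fun j => ⟨?_, ?_, ?_⟩,
    ⟨?_, he.pcomp hf, ?_⟩, ?_⟩
  · exact ((SupportedMod.C _).mul_left hb).add
      ((hg.mul_left (hP _).inv).mul_left ((hc.pcomp hf).sub (SupportedMod.C _)))
  · simpa [constantCoeff_pcomp] using mul_ne_zero hc0 hb0
  · simpa [constantCoeff_pcomp] using mul_ne_zero hg0 hd0
  · simp [constantCoeff_pcomp, (hH j).1]
  · exact ((hP j).mul_left hf.pdivX.inv).mul_left ((hH j).2.1.pcomp hf)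
  · rw [coeff_one_mul, constantCoeff_pcomp, (hH j).1, mul_zero, zero_add, coeff_one_pcomp]
    simp [constantCoeff_pdivX, hf1, (hH j).2.2, (hF j).2.2]
  · rw [constantCoeff_pcomp, he0]
  · rw [coeff_one_pcomp]
    exact mul_ne_zero he1 hf1
  · simpa using pcomp_pow_card_eq_prod hf0 hf1 (fun j => (hF j).1) (by simpa using hfF)
      (by simpa using heH)

theorem maMul_assoc {p q r : MaData K m} (hp : IsMaR m p) (hq : IsMaR m q) :
    maMul (maMul p q) r = maMul p (maMul q r) := by
  obtain ⟨b, g, F, f⟩ := p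
  obtain ⟨c, d, H, e⟩ := q
  obtain ⟨a, u, L, w⟩ := r
  rw [isMaR_iff] at hp hq
  obtain ⟨-, -, -, -, hF, ⟨hf0, -, hf1⟩, -⟩ := hp
  obtain ⟨-, -, -, -, hH, ⟨he0, -, he1⟩, -⟩ := hq
  have hpdivX_mul (j) : pdivX (pdivX (F j) * (pdivX f)⁻¹ * pcomp (H j) f) =
      pdivX (F j) * pcomp (pdivX (H j)) f := by
    rw [pdivX_mul_left _ (by rw [constantCoeff_pcomp, (hH j).1]), pdivX_pcomp (hH j).1 hf0,
      mul_assoc, ← mul_assoc _ (pdivX f),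
      PowerSeries.inv_mul_cancel _ (constantCoeff_pdivX_ne_zero hf1), one_mul]
  simp only [maMul, Prod.mk.injEq]
  refine ⟨?_, ?_, funext fun j => ?_, (pcomp_pcomp hf0 he0 w).symm⟩
  · rw [hpdivX_mul, PowerSeries.mul_inv_rev]
    simp only [pcomp_add hf0, pcomp_mul hf0, pcomp_sub hf0, pcomp_C hf0,
      pcomp_inv hf0 (constantCoeff_pdivX_ne_zero (hH _).2.2), pcomp_pcomp hf0 he0, map_add,
      map_mul, map_sub, constantCoeff_C, constantCoeff_pcomp]
    ring
  · rw [pcomp_mul hf0, pcomp_pcomp hf0 he0, mul_assoc]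
  · rw [hpdivX_mul, pdivX_pcomp he0 hf0, PowerSeries.mul_inv_rev]
    simp only [pcomp_mul hf0, pcomp_inv hf0 (constantCoeff_pdivX_ne_zero he1), pcomp_pcomp hf0 he0]
    ring

theorem maOne_maMul (p : MaData K m) : maMul (maOne K m) p = p := by
  obtain ⟨b, g, F, f⟩ := p
  simp only [maMul, pdivX_X, inv_one, pcomp_X_right, one_mul, mul_one, add_sub_cancel]

theorem maMul_maOne {p : MaData K m} (hp : IsMaR m p) : maMul p (maOne K m) = p := by
  obtain ⟨b, g, F, f⟩ := p
  rw [isMaR_iff] at hp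
  obtain ⟨-, -, -, -, hF, ⟨hf0, -, hf1⟩, -⟩ := hp
  simp only [maMul, Prod.mk.injEq, map_one, pcomp_one hf0, pcomp_X hf0, sub_self,
    mul_zero, one_mul, add_zero, mul_one, true_and, and_true]
  funext j
  calc pdivX (F j) * (pdivX f)⁻¹ * f = pdivX (F j) * (pdivX f)⁻¹ * (X * pdivX f) := by
        rw [X_mul_pdivX hf0]
    _ = X * pdivX (F j) := by
        linear_combination (X * pdivX (F j)) *
          PowerSeries.inv_mul_cancel _ (constantCoeff_pdivX_ne_zero hf1)
    _ = F j := X_mul_pdivX (hF j).1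

theorem isMaR_maOne : IsMaR m (maOne K m) :=
  isMaR_iff.mpr ⟨.one, by simp, .one, by simp, fun _ => ⟨constantCoeff_X, .X, by simp⟩,
    ⟨constantCoeff_X, .X, by simp⟩, by simp⟩

theorem isMaR_maInv {p : MaData K m} (hp : IsMaR m p) {h' : K⟦X⟧} (hh'0 : constantCoeff h' = 0)
    (hh' : SupportedMod (m + 1) 1 h') (hh'1 : coeff 1 h' ≠ 0) : IsMaR m (maInv p h') := by
  obtain ⟨b, g, F, f⟩ := p
  rw [isMaR_iff] at hp
  obtain ⟨hb, hb0, hg, hg0, hF, ⟨hf0, hf, hf1⟩, hfF⟩ := hp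
  have hP (j) := constantCoeff_pdivX_ne_zero (hF j).2.2
  refine isMaR_iff.mpr ⟨?_, ?_, hg.inv.pcomp hh', ?_, fun j => ⟨?_, ?_, ?_⟩, ⟨hh'0, hh', hh'1⟩, ?_⟩
  · refine ((SupportedMod.C _).add ?_).pcomp hh'
    exact (hg.inv.mul_left (hF _).2.1.pdivX).mul_left (SupportedMod.one.sub
      ((SupportedMod.C _).mul_left hb))
  · simp [constantCoeff_pcomp, hb0]
  · simp [constantCoeff_pcomp, hg0]
  · simp [constantCoeff_pcomp, hf0]
  · exact ((hF j).2.1.pdivX.inv.mul_left hf).pcomp hh'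
  · rw [coeff_one_pcomp, coeff_one_mul, hf0, mul_zero, zero_add, constantCoeff_inv]
    exact mul_ne_zero (mul_ne_zero hf1 (inv_ne_zero (hP j))) hh'1
  · have := prod_inv_pdivX_mul_eq_X_pow hf0 (fun j => (hF j).1) (fun j => (hF j).2.2)
      (by simpa using hfF)
    simp only [Fintype.card_fin] at this
    rw [← pcomp_prod hh'0, this, pcomp_pow hh'0, pcomp_X hh'0]

theorem maMul_maInv {p : MaData K m} (hp : IsMaR m p) {h' : K⟦X⟧} (hh'0 : constantCoeff h' = 0)
    (hh' : pcomp h' p.2.2.2 = X) : maMul p (maInv p h') = maOne K m := by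
  obtain ⟨b, g, F, f⟩ := p
  rw [isMaR_iff] at hp
  obtain ⟨-, hb0, -, hg0, hF, ⟨hf0, -, hf1⟩, -⟩ := hp
  have hback (a : K⟦X⟧) : pcomp (pcomp a h') f = a := by
    rw [pcomp_pcomp hf0 hh'0, hh', pcomp_X_right]
  have hP (j) := constantCoeff_pdivX_ne_zero (hF j).2.2
  simp only [maMul, maInv, Prod.mk.injEq, hback, constantCoeff_pcomp]
  refine ⟨?_, PowerSeries.mul_inv_cancel _ hg0, funext fun j => ?_, hh'⟩
  · have hc : constantCoeff (C (constantCoeff b)⁻¹ +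
        g⁻¹ * pdivX (F (Fin.last m)) * (1 - C (constantCoeff b)⁻¹ * b)) = (constantCoeff b)⁻¹ := by
      simp [inv_mul_cancel₀ hb0]
    rw [hc]
    linear_combination (pdivX (F (Fin.last m)))⁻¹ * pdivX (F (Fin.last m)) *
        (1 - C (constantCoeff b)⁻¹ * b) * PowerSeries.mul_inv_cancel _ hg0 +
      (1 - C (constantCoeff b)⁻¹ * b) * PowerSeries.inv_mul_cancel _ (hP _)
  · linear_combination (-(pdivX (F j) * (pdivX f)⁻¹ * (pdivX (F j))⁻¹)) * X_mul_pdivX hf0 +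
      X * (pdivX f)⁻¹ * pdivX f * PowerSeries.mul_inv_cancel _ (hP j) +
      X * PowerSeries.inv_mul_cancel _ (constantCoeff_pdivX_ne_zero hf1)

theorem exists_maMul_eq_maOne {p : MaData K m} (hp : IsMaR m p) :
    ∃ q, IsMaR m q ∧ maMul p q = maOne K m ∧ maMul q p = maOne K m := by
  obtain ⟨-, -, -, -, -, hf, -⟩ := id hp
  obtain ⟨hf0, hfS, hf1⟩ := isMult_iff.mp hf
  have hu : IsUnit (coeff 1 p.2.2.2) := hf1.isUnit
  set h' := p.2.2.2.substInvOfIsUnit hu with hh'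
  have hh'0 : constantCoeff h' = 0 := constantCoeff_substInvOfIsUnit _ hu
  set q := maInv p h'
  have hq : IsMaR m q := isMaR_maInv hp hh'0 (hfS.substInvOfIsUnit hu)
    (by rw [hh', coeff_one_substInvOfIsUnit]; exact Units.ne_zero _)
  have hpq : maMul p q = maOne K m := maMul_maInv hp hh'0 <| by
    rw [pcomp_eq_subst hf0, subst_substInvOfIsUnit_left _ hf0]
  set r := maInv q p.2.2.2
  have hqr : maMul q r = maOne K m := maMul_maInv hq hf0 <| by
    show pcomp p.2.2.2 h' = X
    rw [pcomp_eq_subst hh'0, subst_substInvOfIsUnit_right _ hf0]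
  refine ⟨q, hq, hpq, ?_⟩
  calc maMul q p = maMul (maMul q p) (maMul q r) := by rw [hqr, maMul_maOne (isMaR_maMul hq hp)]
    _ = maMul q (maMul (maMul p q) r) := by rw [maMul_assoc hq hp, maMul_assoc hp hq]
    _ = maOne K m := by rw [hpq, maOne_maMul, hqr]

end Arrays

end AlmostRiordan

theorem multiple_almost_riordan_group {K : Type*} [Field K] (m : ℕ) :
    (∀ p q : PowerSeries K × PowerSeries K × (Fin (m + 1) → PowerSeries K) × PowerSeries K,
      IsMaR m p → IsMaR m q → IsMaR m (maMul p q)) ∧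
    (∀ p q r : PowerSeries K × PowerSeries K × (Fin (m + 1) → PowerSeries K) × PowerSeries K,
      IsMaR m p → IsMaR m q → IsMaR m r → maMul (maMul p q) r = maMul p (maMul q r)) ∧
    IsMaR m ((1, 1, fun _ => X, X) :
      PowerSeries K × PowerSeries K × (Fin (m + 1) → PowerSeries K) × PowerSeries K) ∧
    (∀ p : PowerSeries K × PowerSeries K × (Fin (m + 1) → PowerSeries K) × PowerSeries K,
      IsMaR m p → maMul (1, 1, fun _ => X, X) p = p ∧ maMul p (1, 1, fun _ => X, X) = p) ∧
    (∀ p : PowerSeries K × PowerSeries K × (Fin (m + 1) → PowerSeries K) × PowerSeries K,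
      IsMaR m p →
      ∃ q : PowerSeries K × PowerSeries K × (Fin (m + 1) → PowerSeries K) × PowerSeries K,
        IsMaR m q ∧ maMul p q = (1, 1, fun _ => X, X) ∧
          maMul q p = (1, 1, fun _ => X, X)) :=
  ⟨fun _ _ => AlmostRiordan.isMaR_maMul,
    fun _ _ _ hp hq _ => AlmostRiordan.maMul_assoc hp hq,
    AlmostRiordan.isMaR_maOne,
    fun p hp => ⟨AlmostRiordan.maOne_maMul p, AlmostRiordan.maMul_maOne hp⟩,
    fun _ => AlmostRiordan.exists_maMul_eq_maOne⟩
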